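/- arXiv:1607.01842 — 4 statements merged into one kernel-verified Lean document; each statement's English description precedes it below -/
import Mathlib

section
/- Let N ≥ 1 be an integer, H a subgroup of ℤ_N, z ∈ ℤ_N, and f : ℤ_N → ℂ. Define the restriction of f to the coset z + H in the frequency domain by f_A(x) := Σ_{α ∈ z+H} f̂(α)·χ_α(x). Then for every x ∈ ℤ_N, f_A(x) = (1/|H^⊥|) · Σ_{y ∈ H^⊥} f(x − y)·e^{2πi·z·y/N}, where H^⊥ = {a ∈ ℤ_N : e^{2πi·a·h/N} = 1 for all h ∈ H}. -/
open scoped Classical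

/-- The character `χ_a` of `ℤ_N`, given by `χ_a(x) = e^{2πi·a·x/N}`. -/
noncomputable def chr (N : ℕ) (a x : ZMod N) : ℂ :=
  Complex.exp (2 * (Real.pi : ℂ) * Complex.I * (a.val : ℂ) * (x.val : ℂ) / (N : ℂ))

/-- The Fourier transform `f̂(a) = (1/N) Σ_x f(x)·e^{−2πi·a·x/N}`. -/
noncomputable def dft {N : ℕ} [NeZero N] (f : ZMod N → ℂ) (a : ZMod N) : ℂ :=
  (N : ℂ)⁻¹ * ∑ x : ZMod N,
    f x * Complex.exp (-(2 * (Real.pi : ℂ) * Complex.I * (a.val : ℂ) * (x.val : ℂ) / (N : ℂ)))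

/-- The orthogonal set `H^⊥ = {a ∈ ℤ_N : χ_a(h) = 1 for all h ∈ H}`. -/
def perp (N : ℕ) (H : AddSubgroup (ZMod N)) : Set (ZMod N) :=
  {a : ZMod N | ∀ h ∈ H, chr N a h = 1}

/-!
Expanding `f̂` and exchanging the sums writes `f_A` as the convolution of `f` with the kernel
`y ↦ N⁻¹ Σ_{α ∈ z + H} χ_α(y) = N⁻¹ χ_z(y) Σ_{h ∈ H} χ_y(h)`. The character sum over `H` is `|H|`
for `y ∈ H^⊥` and `0` otherwise, so only translates by `H^⊥` survive, with weight `|H| / N`.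
Finally `|H^⊥| · |H| = N`: count `Σ_w Σ_{h ∈ H} χ_w(h)` in both orders, using that the standard
character of `ℤ_N` is primitive.
-/

open Finset
open ZMod (stdAddChar stdAddChar_coe isPrimitive_stdAddChar)

section CharacterSums

variable {G R M : Type*} [AddGroup G] [Fintype G] [CommRing R] [Fintype R]
  [CommRing M] [IsDomain M]

lemma AddChar.sum_addSubgroup_eq_ite (ψ : AddChar G M) (H : AddSubgroup G)
    [DecidablePred (· ∈ H)] :
    ∑ h ∈ univ.filter (· ∈ H), ψ h
      = if ∀ h ∈ H, ψ h = 1 then ((univ.filter (· ∈ H)).card : M) else 0 := by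
  have hsub : ∑ h ∈ univ.filter (· ∈ H), ψ h = ∑ h : H, ψ.compAddMonoidHom H.subtype h :=
    sum_subtype _ (fun _ => mem_filter_univ _) _
  have htriv : ψ.compAddMonoidHom H.subtype = 0 ↔ ∀ h ∈ H, ψ h = 1 := by
    simp [AddChar.eq_zero_iff]
  rw [hsub, AddChar.sum_eq_ite, Fintype.card_subtype]
  exact if_congr htriv rfl rfl

lemma AddChar.sum_coset_mul_eq (ψ : AddChar R M) (H : AddSubgroup R) [DecidablePred (· ∈ H)]
    (z w : R) [DecidablePred fun α => ∃ h ∈ H, α = z + h] :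
    ∑ α ∈ univ.filter (fun α => ∃ h ∈ H, α = z + h), ψ (α * w)
      = ψ (z * w) *
        if ∀ h ∈ H, ψ (w * h) = 1 then ((univ.filter (· ∈ H)).card : M) else 0 := by
  have hcoset :
      univ.filter (fun α => ∃ h ∈ H, α = z + h) = (univ.filter (· ∈ H)).image (z + ·) := by
    ext α
    simp only [mem_filter_univ, mem_image]
    constructor <;> rintro ⟨h, hh, rfl⟩ <;> exact ⟨h, hh, rfl⟩
  rw [hcoset, sum_image (fun _ _ _ _ => add_left_cancel)]
  calc _ = ψ (z * w) * ∑ h ∈ univ.filter (· ∈ H), ψ (w * h) := by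
        rw [mul_sum]
        refine sum_congr rfl fun h _ => ?_
        rw [← AddChar.map_add_eq_mul, add_mul, mul_comm h]
    _ = _ := congrArg _ ((ψ.mulShift w).sum_addSubgroup_eq_ite H)

lemma AddChar.card_annihilator_mul_card (ψ : AddChar R M) (hψ : ψ.IsPrimitive)
    (H : AddSubgroup R) [DecidablePred (· ∈ H)] :
    ((univ.filter (fun w => ∀ h ∈ H, ψ (w * h) = 1)).card : M) * (univ.filter (· ∈ H)).card
      = Fintype.card R :=
  calc _ = ∑ w, if ∀ h ∈ H, ψ (w * h) = 1 then ((univ.filter (· ∈ H)).card : M) else 0 := by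
        rw [sum_ite, sum_const_zero, add_zero, sum_const, nsmul_eq_mul]
    _ = ∑ w, ∑ h ∈ univ.filter (· ∈ H), ψ (w * h) :=
        sum_congr rfl fun w _ => ((ψ.mulShift w).sum_addSubgroup_eq_ite H).symm
    _ = ∑ h ∈ univ.filter (· ∈ H), if h = 0 then (Fintype.card R : M) else 0 := by
        rw [sum_comm]
        refine sum_congr rfl fun h _ => ?_
        rw [AddChar.sum_mulShift h hψ, Nat.cast_ite, Nat.cast_zero]
    _ = Fintype.card R := by simp [H.zero_mem]

end CharacterSums

section ZModFourier

variable {N : ℕ} [NeZero N]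

lemma chr_eq_stdAddChar (a x : ZMod N) : chr N a x = stdAddChar (a * x) := by
  have h := stdAddChar_coe (N := N) ((a.val : ℤ) * x.val)
  push_cast [ZMod.natCast_zmod_val] at h
  rw [h, chr, mul_assoc _ (a.val : ℂ)]

lemma dft_eq_sum_stdAddChar (f : ZMod N → ℂ) (a : ZMod N) :
    dft f a = (N : ℂ)⁻¹ * ∑ t, f t * stdAddChar (-(a * t)) := by
  rw [dft]
  refine congrArg _ (sum_congr rfl fun t _ => ?_)
  rw [AddChar.map_neg_eq_inv, ← chr_eq_stdAddChar, chr, Complex.exp_neg]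

lemma mem_perp_iff {H : AddSubgroup (ZMod N)} {w : ZMod N} :
    w ∈ perp N H ↔ ∀ h ∈ H, stdAddChar (w * h) = 1 := by
  simp [perp, chr_eq_stdAddChar]

lemma card_perp_mul_card (H : AddSubgroup (ZMod N)) :
    ((univ.filter (· ∈ perp N H)).card : ℂ) * (univ.filter (· ∈ H)).card = N := by
  simp_rw [mem_perp_iff]
  rw [AddChar.card_annihilator_mul_card _ (isPrimitive_stdAddChar N), ZMod.card]

lemma inv_card_perp (H : AddSubgroup (ZMod N)) :
    ((univ.filter (· ∈ perp N H)).card : ℂ)⁻¹ = (N : ℂ)⁻¹ * (univ.filter (· ∈ H)).card := by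
  have hH : ((univ.filter (· ∈ H)).card : ℂ) ≠ 0 :=
    Nat.cast_ne_zero.mpr (card_pos.mpr ⟨0, (mem_filter_univ _).mpr H.zero_mem⟩).ne'
  rw [← card_perp_mul_card H, mul_inv, mul_assoc, inv_mul_cancel₀ hH, mul_one]

lemma sum_dft_mul_chr (f : ZMod N → ℂ) (S : Finset (ZMod N)) (x : ZMod N) :
    ∑ α ∈ S, dft f α * chr N α x
      = (N : ℂ)⁻¹ * ∑ y, f (x - y) * ∑ α ∈ S, stdAddChar (α * y) :=
  calc _ = (N : ℂ)⁻¹ * ∑ α ∈ S, ∑ t, f t * stdAddChar (α * (x - t)) := by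
        rw [mul_sum]
        refine sum_congr rfl fun α _ => ?_
        rw [dft_eq_sum_stdAddChar, chr_eq_stdAddChar, mul_assoc, sum_mul]
        refine congrArg _ (sum_congr rfl fun t _ => ?_)
        rw [mul_assoc, ← AddChar.map_add_eq_mul, mul_sub, neg_add_eq_sub]
    _ = (N : ℂ)⁻¹ * ∑ t, f t * ∑ α ∈ S, stdAddChar (α * (x - t)) := by
        rw [sum_comm]
        simp_rw [mul_sum]
    _ = _ := congrArg _ (Fintype.sum_equiv (Equiv.subLeft x) _ _ fun t => by simp)

end ZModFourier

/-- The filter-function/convolution identity: the restriction of `f` to the coset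
`z + H` of frequencies can be evaluated by averaging `f` over translates by `H^⊥`. -/
theorem stmt1 (N : ℕ) [NeZero N] (H : AddSubgroup (ZMod N)) (z : ZMod N)
    (f : ZMod N → ℂ) (x : ZMod N) :
    ∑ α ∈ Finset.univ.filter (fun α : ZMod N => ∃ h ∈ H, α = z + h),
        dft f α * chr N α x
      = ((Finset.univ.filter (fun a : ZMod N => a ∈ perp N H)).card : ℂ)⁻¹ *
        ∑ y ∈ Finset.univ.filter (fun a : ZMod N => a ∈ perp N H),
          f (x - y) * chr N z y := by
  calc _ = (N : ℂ)⁻¹ * ∑ y, f (x - y) * (stdAddChar (z * y) *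
          if y ∈ perp N H then ((univ.filter (· ∈ H)).card : ℂ) else 0) := by
        simp_rw [sum_dft_mul_chr, AddChar.sum_coset_mul_eq, ← mem_perp_iff]
    _ = (N : ℂ)⁻¹ * (univ.filter (· ∈ H)).card *
          ∑ y ∈ univ.filter (· ∈ perp N H), f (x - y) * chr N z y := by
        rw [mul_assoc]
        congr 1
        rw [sum_filter, mul_sum]
        refine sum_congr rfl fun y _ => ?_
        split_ifs
        · rw [chr_eq_stdAddChar]; ring
        · simp only [mul_zero]
    _ = _ := by rw [inv_card_perp]
end

section
/- Let N ≥ 2 be an integer and let α be an integer not divisible by N. Then |(1/N) · Σ_{x integer, 0 ≤ x < N/2} e^{−2πi·α·x/N}| < 1/| |α|_N |, where |α|_N denotes the unique integer in the interval (−N/2, N/2] congruent to α modulo N. -/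
/-!
The sum is geometric with ratio `ω = exp(-2πiα/N)`, so it is at most `2 / |ω - 1|`, and
`|ω - 1| = 2 |sin(πα/N)|`. Since `|sin|` is `π`-periodic, `α` may be replaced by
`a = |α|_N`, and then `|πa/N| ≤ π/2`, so Jordan's inequality `|sin x| ≥ 2|x|/π` gives
`|ω - 1| ≥ 4|a|/N`. Altogether the average is at most `1/(2|a|)`.
-/

open Real Complex Finset

lemma norm_geom_sum_le_two_div_of_norm_eq_one {K : Type*} [NormedDivisionRing K] {ω : K}
    (hω : ‖ω‖ = 1) (hω₁ : ω ≠ 1) (M : ℕ) :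
    ‖∑ x ∈ range M, ω ^ x‖ ≤ 2 / ‖ω - 1‖ := by
  rw [geom_sum_eq hω₁, norm_div]
  gcongr
  calc ‖ω ^ M - 1‖ ≤ ‖ω ^ M‖ + ‖(1 : K)‖ := norm_sub_le _ _
    _ = 2 := by rw [norm_pow, hω, one_pow, norm_one]; norm_num

lemma norm_exp_neg_two_pi_I_mul_sub_one (t : ℝ) :
    ‖exp (-(2 * π * I * t)) - 1‖ = 2 * |Real.sin (π * t)| := by
  have h := Complex.norm_exp_I_mul_ofReal_sub_one (-(2 * π * t))
  rw [norm_mul, Real.norm_eq_abs, Real.norm_eq_abs, abs_two,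
    show -(2 * π * t) / 2 = -(π * t) by ring, Real.sin_neg, abs_neg] at h
  rw [← h]
  push_cast
  ring_nf

lemma abs_sin_pi_mul_div_eq_of_modEq {N : ℕ} {α β : ℤ} (h : α ≡ β [ZMOD N]) :
    |Real.sin (π * α / N)| = |Real.sin (π * β / N)| := by
  obtain ⟨k, hk⟩ := Int.modEq_iff_dvd.mp h
  rcases eq_or_ne N 0 with rfl | hN
  · simp
  have hβ : π * β / N = π * α / N + k * π := by
    rw [show (β : ℝ) = α + N * k by exact_mod_cast (by linarith : β = α + N * k)]
    field_simp
  rw [hβ, Real.sin_add_int_mul_pi, abs_mul, abs_zpow, abs_neg, abs_one, one_zpow, one_mul]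

lemma two_mul_abs_valMinAbs_div_le_abs_sin {N : ℕ} [NeZero N] (α : ℤ) :
    2 * |((α : ZMod N).valMinAbs : ℝ)| / N ≤ |Real.sin (π * α / N)| := by
  set a := (α : ZMod N).valMinAbs
  have hN : (0 : ℝ) < N := by have := NeZero.pos N; positivity
  have ha : 2 * |(a : ℝ)| ≤ N := by
    obtain ⟨hlo, hhi⟩ := Set.mem_Ioc.mp (α : ZMod N).valMinAbs_mem_Ioc
    have : 2 * |a| ≤ N := by rcases abs_cases a with ⟨h, _⟩ | ⟨h, _⟩ <;> rw [h] <;> omega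
    exact_mod_cast this
  have hmod : α ≡ a [ZMOD N] :=
    (ZMod.intCast_eq_intCast_iff _ _ _).mp (ZMod.coe_valMinAbs _).symm
  rw [abs_sin_pi_mul_div_eq_of_modEq hmod]
  have hπ : |π * a / N| ≤ π / 2 := by
    rw [abs_div, abs_mul, abs_of_pos pi_pos, abs_of_pos hN, div_le_div_iff₀ hN two_pos]
    nlinarith [pi_pos]
  calc 2 * |(a : ℝ)| / N = 2 / π * |π * a / N| := by
        rw [abs_div, abs_mul, abs_of_pos pi_pos, abs_of_pos hN]; field_simp
    _ ≤ |Real.sin (π * a / N)| := mul_abs_le_abs_sin hπ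

theorem stmt3_general (N : ℕ) [NeZero N] (α : ℤ) (hα : ¬ (N : ℤ) ∣ α) :
    ‖(N : ℂ)⁻¹ * ∑ x ∈ Finset.range ((N + 1) / 2),
        Complex.exp (-(2 * (Real.pi : ℂ) * Complex.I * (α : ℂ) * (x : ℂ) / (N : ℂ)))‖
      < 1 / ((((α : ZMod N).valMinAbs).natAbs : ℝ)) := by
  set A : ℝ := |((α : ZMod N).valMinAbs : ℝ)|
  have hN : (0 : ℝ) < N := by have := NeZero.pos N; positivity
  have hA : 0 < A := by
    rw [abs_pos, Int.cast_ne_zero, Ne, ZMod.valMinAbs_eq_zero, ZMod.intCast_zmod_eq_zero_iff_dvd]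
    exact hα
  set ω := exp (-(2 * π * I * ((α / N : ℝ) : ℂ)))
  have hterm (x : ℕ) : exp (-(2 * π * I * α * x / N)) = ω ^ x := by
    rw [← Complex.exp_nat_mul]; push_cast; ring_nf
  have hω : ‖ω‖ = 1 := by
    rw [Complex.norm_exp]; simp
  have hden : 4 * A / N ≤ ‖ω - 1‖ := by
    rw [norm_exp_neg_two_pi_I_mul_sub_one, ← mul_div_assoc,
      show 4 * A / N = 2 * (2 * A / N) by ring]
    gcongr
    exact two_mul_abs_valMinAbs_div_le_abs_sin α
  have hω₁ : ω ≠ 1 := sub_ne_zero.mp (norm_pos_iff.mp (lt_of_lt_of_le (by positivity) hden))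
  rw [Nat.cast_natAbs, Int.cast_abs, norm_mul, norm_inv, Complex.norm_natCast]
  simp_rw [hterm]
  calc (N : ℝ)⁻¹ * ‖∑ x ∈ range ((N + 1) / 2), ω ^ x‖
      ≤ (N : ℝ)⁻¹ * (2 / (4 * A / N)) := by
        gcongr
        exact (norm_geom_sum_le_two_div_of_norm_eq_one hω hω₁ _).trans (by gcongr)
    _ = 1 / (2 * A) := by field_simp; ring
    _ < 1 / A := by gcongr; linarith

/-- For `α` not divisible by `N`, the averaged character sum over the half interval
`0 ≤ x < N/2` is bounded by `1/| |α|_N |`, where `|α|_N ∈ (−N/2, N/2]` is the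
minimal-absolute-value representative of `α` mod `N`. -/
theorem stmt3 (N : ℕ) [NeZero N] (hN : 2 ≤ N) (α : ℤ) (hα : ¬ (N : ℤ) ∣ α) :
    ‖(N : ℂ)⁻¹ * ∑ x ∈ Finset.range ((N + 1) / 2),
        Complex.exp (-(2 * (Real.pi : ℂ) * Complex.I * (α : ℂ) * (x : ℂ) / (N : ℂ)))‖
      < 1 / ((((α : ZMod N).valMinAbs).natAbs : ℝ)) :=
  stmt3_general N α hα
end

section
/- Let N ≥ 2 and T be integers with 1 ≤ T ≤ N/2. Then |(1/T) · Σ_{x=0}^{T−1} e^{2πi·x/N}| ≥ 2/π; in particular this quantity is strictly greater than 1/2. -/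
/-!
Summing the geometric series with ratio `r = e^{2πi/N}` gives the Dirichlet-kernel value
`|sin (πT/N)| / (T |sin (π/N)|)`. Since `πT/N ≤ π/2`, Jordan's inequality bounds the numerator
below by `2T/N`, while `sin (π/N) ≤ π/N` bounds the denominator above by `πT/N`; and `2/π > 1/2`
because `π < 4`.
-/

open Real Complex Finset

lemma norm_geom_sum_exp_I_mul {θ : ℝ} (hθ : Real.sin (θ / 2) ≠ 0) (T : ℕ) :
    ‖∑ x ∈ range T, exp (I * ((x * θ : ℝ) : ℂ))‖ = |Real.sin (T * θ / 2)| / |Real.sin (θ / 2)| := by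
  have hpow (x : ℕ) : exp (I * ((x * θ : ℝ) : ℂ)) = exp (I * θ) ^ x := by
    rw [← Complex.exp_nat_mul]; push_cast; ring_nf
  have hr : exp (I * θ) ≠ 1 := by
    rw [← sub_ne_zero, ← norm_ne_zero_iff, norm_exp_I_mul_ofReal_sub_one]
    simpa using hθ
  rw [sum_congr rfl fun x _ => hpow x, geom_sum_eq hr, norm_div, ← hpow,
    norm_exp_I_mul_ofReal_sub_one, norm_exp_I_mul_ofReal_sub_one, norm_mul, norm_mul,
    Real.norm_eq_abs, Real.norm_eq_abs, Real.norm_eq_abs, abs_two]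
  field_simp

lemma two_div_pi_mul_mul_sin_le_sin_mul {t φ : ℝ} (ht : 0 ≤ t) (hφ : 0 ≤ φ)
    (htφ : t * φ ≤ π / 2) : 2 / π * (t * Real.sin φ) ≤ Real.sin (t * φ) :=
  calc 2 / π * (t * Real.sin φ) ≤ 2 / π * (t * φ) := by
        gcongr; exact Real.sin_le hφ
    _ ≤ Real.sin (t * φ) := mul_le_sin (by positivity) htφ

lemma norm_inv_mul_sum_exp_two_pi_I_mul_div {N : ℕ} (hN : Real.sin (π / N) ≠ 0) (T : ℕ) :
    ‖(T : ℂ)⁻¹ * ∑ x ∈ range T, exp (2 * (π : ℂ) * I * (x : ℂ) / (N : ℂ))‖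
      = |Real.sin (T * (π / N))| / (T * |Real.sin (π / N)|) := by
  have hθ : (2 * π / N) / 2 = π / N := by ring
  have hterm (x : ℕ) : exp (2 * (π : ℂ) * I * (x : ℂ) / (N : ℂ))
      = exp (I * ((x * (2 * π / N) : ℝ) : ℂ)) := by
    push_cast; ring_nf
  rw [sum_congr rfl fun x _ => hterm x, norm_mul, norm_inv, Complex.norm_natCast,
    norm_geom_sum_exp_I_mul (θ := 2 * π / N) (by rwa [hθ]), mul_div_assoc, hθ]
  field_simp

theorem stmt18_general (N T : ℕ) (hT1 : 1 ≤ T) (hTN : 2 * T ≤ N) :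
    2 / Real.pi ≤ ‖(T : ℂ)⁻¹ * ∑ x ∈ Finset.range T,
        Complex.exp (2 * (Real.pi : ℂ) * Complex.I * (x : ℂ) / (N : ℂ))‖
    ∧ 1 / 2 < ‖(T : ℂ)⁻¹ * ∑ x ∈ Finset.range T,
        Complex.exp (2 * (Real.pi : ℂ) * Complex.I * (x : ℂ) / (N : ℂ))‖ := by
  have hT : (1 : ℝ) ≤ T := by exact_mod_cast hT1
  have hN : (2 * T : ℝ) ≤ N := by exact_mod_cast hTN
  have hφ : 0 < π / N := div_pos pi_pos (by linarith)
  have hsin : 0 < Real.sin (π / N) :=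
    Real.sin_pos_of_pos_of_lt_pi hφ (div_lt_self pi_pos (by linarith))
  have hTφ : T * (π / N) ≤ π / 2 := by
    rw [mul_div_assoc', div_le_div_iff₀ (by linarith) two_pos]; nlinarith [pi_pos]
  have hsinT : 0 < Real.sin (T * (π / N)) :=
    Real.sin_pos_of_pos_of_lt_pi (by positivity) (by linarith [pi_pos])
  have hlower : 2 / π ≤ Real.sin (T * (π / N)) / (T * Real.sin (π / N)) := by
    rw [le_div_iff₀ (by positivity)]
    exact two_div_pi_mul_mul_sin_le_sin_mul (by linarith) hφ.le hTφ
  have hhalf : 1 / 2 < 2 / π := by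
    rw [div_lt_div_iff₀ two_pos pi_pos]; linarith [pi_lt_d2]
  rw [norm_inv_mul_sum_exp_two_pi_I_mul_div hsin.ne', abs_of_pos hsinT, abs_of_pos hsin]
  exact ⟨hlower, hhalf.trans_le hlower⟩

/-- For `1 ≤ T ≤ N/2`, Bleichenbacher's bias `|(1/T) Σ_{x=0}^{T−1} e^{2πi·x/N}|` is at
least `2/π`; in particular it is strictly greater than `1/2`. -/
theorem stmt18 (N T : ℕ) (hN : 2 ≤ N) (hT1 : 1 ≤ T) (hTN : 2 * T ≤ N) :
    2 / Real.pi ≤ ‖(T : ℂ)⁻¹ * ∑ x ∈ Finset.range T,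
        Complex.exp (2 * (Real.pi : ℂ) * Complex.I * (x : ℂ) / (N : ℂ))‖
    ∧ 1 / 2 < ‖(T : ℂ)⁻¹ * ∑ x ∈ Finset.range T,
        Complex.exp (2 * (Real.pi : ℂ) * Complex.I * (x : ℂ) / (N : ℂ))‖ :=
  stmt18_general N T hT1 hTN
end

section
/- Let p be an odd prime. For x ∈ ℤ_p, let LSB(x) ∈ {0,1} be the parity of the representative of x in {0,…,p−1}, and define half : ℤ_p → {−1,1} by half(y) = 1 if the representative of y in {0,…,p−1} is less than p/2 and half(y) = −1 otherwise. Then for every x ∈ ℤ_p, (−1)^{LSB(x)} = half(2^{−1}·x), where 2^{−1} is the inverse of 2 modulo p. -/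
/-! Doubling is the inverse of multiplication by `2⁻¹`, and on representatives it is either
`y ↦ 2y` (when `2y < p`, an even number) or `y ↦ 2y - p` (an odd number, since `p` is odd).
So the parity of `x = 2 · (2⁻¹ x)` records exactly whether `2⁻¹ x` lies in the lower half. -/

namespace ZMod

theorem val_two_mul_mod_two_of_odd {n : ℕ} (hn : Odd n) (y : ZMod n) :
    (2 * y).val % 2 = if 2 * y.val < n then 0 else 1 := by
  have : NeZero n := ⟨hn.pos.ne'⟩
  rw [two_mul]
  split_ifs with hlt
  · rw [val_add_of_lt (by omega)]
    omega
  · have hwrap := val_add_val_of_le (a := y) (b := y) (by omega)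
    obtain ⟨k, rfl⟩ := hn
    omega

end ZMod

/-- For an odd prime `p`: `(−1)^{LSB(x)} = half(2⁻¹·x)` on `ℤ_p`, where `LSB(x)` is the
parity of the representative of `x` in `{0,…,p−1}` and `half(y) = 1` if the
representative of `y` is less than `p/2` and `half(y) = −1` otherwise. -/
theorem stmt19 (p : ℕ) [Fact (Nat.Prime p)] (hp : p ≠ 2) (x : ZMod p) :
    ((-1 : ℤ) ^ (x.val % 2))
      = (if 2 * ((2⁻¹ : ZMod p) * x).val < p then (1 : ℤ) else -1) := by
  have htwo : (2 : ZMod p) ≠ 0 := Ring.two_ne_zero (by rwa [ZMod.ringChar_zmod_n])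
  conv_lhs => rw [← mul_inv_cancel_left₀ htwo x]
  rw [ZMod.val_two_mul_mod_two_of_odd ((Fact.out : p.Prime).odd_of_ne_two hp)]
  split_ifs <;> norm_num
end
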